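/- arXiv:1211.1444 — 3 statements merged into one kernel-verified Lean document; each statement's English description precedes it below -/
import Mathlib

section
/- Let Q be a real symmetric matrix and P a positive definite symmetric matrix of the same size. Then for all sufficiently small ε > 0, i^-(Q − εP) = i^-(Q) + dim ker(Q). -/
open Matrix

/-- The negative inertia index of a real matrix: the maximal dimension of a subspace on which
the quadratic form `x ↦ ⟨x, Qx⟩` is negative definite.  For a symmetric matrix this is the
number of negative eigenvalues counted with multiplicity. -/
noncomputable def negIndex {n : ℕ} (Q : Matrix (Fin n) (Fin n) ℝ) : ℕ :=
  sSup {d : ℕ | ∃ W : Submodule ℝ (Fin n → ℝ), Module.finrank ℝ W = d ∧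
    ∀ x ∈ W, x ≠ 0 → x ⬝ᵥ Q.mulVec x < 0}

/-!
Let `q`, `p` be the quadratic forms of `Q`, `P`. The radical of `q` is `ker Q`, and by
Sylvester's law `i⁺(q) + i⁻(q) + dim ker Q = n`. If `W` is a maximal negative definite subspace
of `q`, then `q - εp` is negative definite on `W ⊕ ker Q` for every `ε > 0`, since adding a
vector of the radical does not change `q`; hence `i⁻(q - εp) ≥ i⁻(q) + dim ker Q`. Conversely,
on a maximal positive definite subspace `V` of `q`, compactness of the unit sphere gives
`m * p ≤ q` for some `m > 0`, so `q - εp` is positive semidefinite on `V` for `ε < m` and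
`i⁻(q - εp) ≤ n - i⁺(q)`.
-/

open Module QuadraticMap QuadraticForm

namespace QuadraticForm

variable {𝕜 M : Type*} [Field 𝕜] [LinearOrder 𝕜] [IsStrictOrderedRing 𝕜] [AddCommGroup M]
  [Module 𝕜 M] [FiniteDimensional 𝕜 M]

lemma sigNeg_add_finrank_le_of_nonneg (q : QuadraticForm 𝕜 M) {V : Submodule 𝕜 M}
    (hV : ∀ x ∈ V, 0 ≤ q x) : sigNeg q + finrank 𝕜 V ≤ finrank 𝕜 M := by
  simpa using sigPos_add_finrank_le_of_nonpos (Q := -q) fun x hx => neg_nonpos.2 (hV x hx)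

lemma sigNeg_add_finrank_radical_le_sigNeg_sub (q p : QuadraticForm 𝕜 M) (hp : p.PosDef) :
    sigNeg q + finrank 𝕜 q.radical ≤ sigNeg (q - p) := by
  obtain ⟨W, hWdim, hWneg⟩ := exists_finrank_eq_sigNeg_and_negDef q
  have hW : ∀ w ∈ W, q w ≤ 0 := by
    intro w hw
    rcases eq_or_ne w 0 with rfl | hw0
    · simp
    · simpa using (hWneg ⟨w, hw⟩ (by simpa using hw0)).le
  have hdisj : W ⊓ q.radical = ⊥ := by
    refine (Submodule.eq_bot_iff _).2 fun x ⟨hxW, hxrad⟩ => by_contra fun hx0 => ?_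
    have := hWneg ⟨x, hxW⟩ (by simpa using hx0)
    simp [(mem_radical_iff'.1 hxrad).1] at this
  have hneg : ((-(q - p)).restrict (W ⊔ q.radical)).PosDef := by
    rintro ⟨x, hx⟩ hx0
    obtain ⟨w, hw, k, hk, rfl⟩ := Submodule.mem_sup.1 hx
    have hqx : q (w + k) = q w := by
      rw [add_comm]; exact (mem_radical_iff'.1 hk).2 w
    have := hp (w + k) (by simpa using hx0)
    simp only [restrict_apply, _root_.neg_apply, _root_.sub_apply, hqx]
    linarith [hW w hw]
  calc sigNeg q + finrank 𝕜 q.radical = finrank 𝕜 ↥(W ⊔ q.radical) := by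
        rw [← hWdim, ← Submodule.finrank_sup_add_finrank_inf_eq, hdisj, finrank_bot, add_zero]
    _ ≤ sigNeg (q - p) := le_sigNeg_of_negDef _ hneg

end QuadraticForm

lemma QuadraticMap.PosDef.exists_pos_mul_le {E : Type*} [NormedAddCommGroup E] [NormedSpace ℝ E]
    [FiniteDimensional ℝ E] {q : QuadraticForm ℝ E} (hq : q.PosDef) (hqc : Continuous q)
    (p : QuadraticForm ℝ E) (hpc : Continuous p) : ∃ m > 0, ∀ x, m * p x ≤ q x := by
  have hcont : ContinuousOn (fun x => p x / q x) (Metric.sphere 0 1) :=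
    hpc.continuousOn.div hqc.continuousOn fun x hx =>
      (hq x (ne_zero_of_mem_unit_sphere ⟨x, hx⟩)).ne'
  obtain ⟨C, hC⟩ := (isCompact_sphere (0 : E) 1).bddAbove_image hcont
  refine ⟨(max C 1)⁻¹, by positivity, fun x => ?_⟩
  rcases eq_or_ne x 0 with rfl | hx
  · simp
  set u := ‖x‖⁻¹ • x
  have hu : u ∈ Metric.sphere (0 : E) 1 := mem_sphere_zero_iff_norm.2 (norm_smul_inv_norm hx)
  have hqu : 0 < q u := hq u (ne_zero_of_mem_unit_sphere ⟨u, hu⟩)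
  have hpu : p u ≤ max C 1 * q u := by
    have := hC ⟨u, hu, rfl⟩
    rw [div_le_iff₀ hqu] at this
    nlinarith [le_max_left C 1]
  have hxu : x = ‖x‖ • u := by simp [u, smul_inv_smul₀ (norm_ne_zero_iff.2 hx)]
  clear_value u
  rw [inv_mul_le_iff₀ (by positivity), hxu, QuadraticMap.map_smul, QuadraticMap.map_smul,
    smul_eq_mul, smul_eq_mul]
  nlinarith [mul_le_mul_of_nonneg_left hpu (mul_self_nonneg ‖x‖)]

lemma QuadraticForm.exists_sigNeg_sub_smul_le {E : Type*} [NormedAddCommGroup E]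
    [NormedSpace ℝ E] [FiniteDimensional ℝ E] (q p : QuadraticForm ℝ E) (hqc : Continuous q)
    (hpc : Continuous p) (hp : ∀ x, 0 ≤ p x) :
    ∃ ε₀ : ℝ, 0 < ε₀ ∧ ∀ ε < ε₀, sigNeg (q - ε • p) ≤ sigNeg q + finrank ℝ q.radical := by
  obtain ⟨V, hVdim, hVpos⟩ := exists_finrank_eq_sigPos_and_posDef q
  obtain ⟨m, hm, hmV⟩ := hVpos.exists_pos_mul_le (hqc.comp continuous_subtype_val)
    (p.restrict V) (hpc.comp continuous_subtype_val)
  refine ⟨m, hm, fun ε hε => ?_⟩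
  have hV : ∀ x ∈ V, 0 ≤ (q - ε • p) x := fun x hx => by
    have := hmV ⟨x, hx⟩
    simp only [restrict_apply] at this
    simp only [_root_.sub_apply, _root_.smul_apply, smul_eq_mul]
    nlinarith [hp x]
  have := sigNeg_add_finrank_le_of_nonneg _ hV
  have := sigPos_add_sigNeg_add_radical (Q := q)
  omega

namespace Matrix

variable {ι : Type*} [Fintype ι] [DecidableEq ι]

section CommRing

variable {R : Type*} [CommRing R]

lemma toQuadraticForm'_apply (A : Matrix ι ι R) (x : ι → R) :
    A.toQuadraticForm' x = x ⬝ᵥ A *ᵥ x := by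
  simp [toQuadraticForm', toLinearMap₂'_apply']

lemma toQuadraticForm'_sub_smul (A B : Matrix ι ι R) (c : R) :
    (A - c • B).toQuadraticForm' = A.toQuadraticForm' - c • B.toQuadraticForm' := by
  ext x
  simp [toQuadraticForm'_apply, sub_mulVec, dotProduct_sub, smul_mulVec, dotProduct_smul]

end CommRing

lemma continuous_toQuadraticForm' (A : Matrix ι ι ℝ) : Continuous A.toQuadraticForm' := by
  simp only [funext (toQuadraticForm'_apply A)]
  fun_prop

lemma IsSymm.radical_toQuadraticForm' {K : Type*} [Field K] [NeZero (2 : K)]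
    {A : Matrix ι ι K} (hA : A.IsSymm) :
    A.toQuadraticForm'.radical = LinearMap.ker (toLin' A) := by
  have : Invertible (2 : K) := invertibleOfNonzero two_ne_zero
  rw [radical_eq_ker_polarBilin]
  ext x
  have hpolar : ∀ y, polar A.toQuadraticForm' x y = 2 * (A *ᵥ x ⬝ᵥ y) := by
    intro y
    rw [toQuadraticForm', LinearMap.BilinMap.polar_toQuadraticMap, toLinearMap₂'_apply',
      toLinearMap₂'_apply', dotProduct_mulVec, ← mulVec_transpose, hA.eq, dotProduct_comm]
    ring
  simp [LinearMap.ext_iff, hpolar, two_ne_zero, dotProduct_eq_zero_iff]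

end Matrix

lemma negIndex_eq_sigNeg {n : ℕ} (A : Matrix (Fin n) (Fin n) ℝ) :
    negIndex A = sigNeg A.toQuadraticForm' := by
  rw [negIndex, ← (sigNeg_isGreatest _).csSup_eq]
  congr 1
  ext d
  refine exists_congr fun W => and_congr_right fun _ => ⟨fun h x hx0 => ?_, fun h x hx hx0 => ?_⟩
  · simpa [toQuadraticForm'_apply] using h x x.2 (by simpa using hx0)
  · simpa [toQuadraticForm'_apply] using h ⟨x, hx⟩ (by simpa using hx0)

/-- Let `Q` be a real symmetric matrix and `P` a positive definite symmetric matrix of the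
same size.  Then for all sufficiently small `ε > 0`,
`i⁻(Q − εP) = i⁻(Q) + dim ker(Q)`. -/
theorem negIndex_sub_smul_posDef (n : ℕ) (Q P : Matrix (Fin n) (Fin n) ℝ)
    (hQ : Q.IsSymm) (hP : P.PosDef) :
    ∃ ε₀ > 0, ∀ ε : ℝ, 0 < ε → ε < ε₀ →
      negIndex (Q - ε • P) =
        negIndex Q + Module.finrank ℝ (LinearMap.ker (Matrix.toLin' Q)) := by
  obtain ⟨ε₀, hε₀, hle⟩ := exists_sigNeg_sub_smul_le Q.toQuadraticForm' P.toQuadraticForm'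
    (continuous_toQuadraticForm' Q) (continuous_toQuadraticForm' P) hP.toQuadraticForm'.nonneg
  refine ⟨ε₀, hε₀, fun ε hε hεε₀ => ?_⟩
  rw [negIndex_eq_sigNeg, negIndex_eq_sigNeg, toQuadraticForm'_sub_smul,
    ← hQ.radical_toQuadraticForm']
  exact le_antisymm (hle ε hεε₀)
    (sigNeg_add_finrank_radical_le_sigNeg_sub _ _ (hP.toQuadraticForm'.smul hε))
end

section
/- For every r ≥ 1, Z^{(r)} = ⋃_{α ∈ I_r} ⋂_{j ∈ α} A_j, where I_r is the collection of subsets of {0,...,n−1} consisting of r consecutive integers, A_j is the topological boundary of P_j = {Q ∈ Sym_n(R) : i^-(Q) ≤ j}, and Z^{(r)} = {Q ∈ Sym_n(R) : dim ker(Q) ≥ r}. -/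
open Matrix

/-- The space of real symmetric `n×n` matrices with its natural topology. -/
abbrev SymMat (n : ℕ) : Type := {Q : Matrix (Fin n) (Fin n) ℝ // Q.IsSymm}

/-- `P_j = {Q ∈ Sym_n(ℝ) : i⁻(Q) ≤ j}`. -/
noncomputable def Pj (n j : ℕ) : Set (SymMat n) := {Q | negIndex Q.1 ≤ j}

/-- `A_j` is the topological boundary of `P_j` in `Sym_n(ℝ)`. -/
noncomputable def Aj (n j : ℕ) : Set (SymMat n) := frontier (Pj n j)

/-!
`Q ∈ A_j` exactly when `i⁻(Q) ≤ j < i⁻(Q) + dim ker Q`. Negative definiteness on a fixed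
subspace is an open condition, so `i⁻` is lower semicontinuous and `P_j` is closed. Near `Q`,
a negative subspace of `Q'` meets a negative subspace of `-Q'` trivially, so
`i⁻(Q') ≤ n - i⁻(-Q') ≤ n - i⁻(-Q) ≤ i⁻(Q) + dim ker Q`, the last step by the spectral theorem.
The bound is attained by `Q - δ • 1` for every `δ > 0`, which is negative definite on the sum of
a maximal negative subspace of `Q` and `ker Q`. So the indices `j` with `Q ∈ A_j` form the
interval `[i⁻(Q), i⁻(Q) + dim ker Q)`, which contains `r` consecutive integers exactly when
`dim ker Q ≥ r`.
-/

open Module Submodule Filter Topology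

section QuadraticForm

variable {ι : Type*} [Fintype ι]

def NegDefOn (Q : Matrix ι ι ℝ) (W : Submodule ℝ (ι → ℝ)) : Prop :=
  ∀ x ∈ W, x ≠ 0 → x ⬝ᵥ Q *ᵥ x < 0

lemma smul_dotProduct_mulVec_smul (Q : Matrix ι ι ℝ) (c : ℝ) (x : ι → ℝ) :
    c • x ⬝ᵥ Q *ᵥ (c • x) = c ^ 2 * (x ⬝ᵥ Q *ᵥ x) := by
  rw [mulVec_smul, dotProduct_smul, smul_dotProduct, smul_eq_mul, smul_eq_mul]
  ring

lemma isOpen_setOf_negDefOn (W : Submodule ℝ (ι → ℝ)) :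
    IsOpen {Q : Matrix ι ι ℝ | NegDefOn Q W} := by
  refine isOpen_iff_eventually.2 fun Q₀ hQ₀ => ?_
  set K := Metric.sphere (0 : ι → ℝ) 1 ∩ W
  have hK : IsCompact K := (isCompact_sphere 0 1).inter_right W.closed_of_finiteDimensional
  have hquad : Continuous fun p : Matrix ι ι ℝ × (ι → ℝ) => p.2 ⬝ᵥ p.1 *ᵥ p.2 := by
    simp only [dotProduct, mulVec]
    fun_prop
  have hsphere : ∀ᶠ Q in 𝓝 Q₀, ∀ u ∈ K, u ⬝ᵥ Q *ᵥ u < 0 :=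
    hK.eventually_forall_of_forall_eventually fun u hu => hquad.continuousAt.eventually
      (Iio_mem_nhds (hQ₀ u hu.2 (ne_zero_of_mem_unit_sphere ⟨u, hu.1⟩)))
  filter_upwards [hsphere] with Q hQ x hx hx0
  have hu := hQ (‖x‖⁻¹ • x) ⟨by simp [norm_smul, hx0], W.smul_mem _ hx⟩
  rw [smul_dotProduct_mulVec_smul] at hu
  exact neg_of_mul_neg_right hu (sq_nonneg _)

lemma negDefOn_sub_smul_one [DecidableEq ι] {Q : Matrix ι ι ℝ} {U : Submodule ℝ (ι → ℝ)}
    (hU : ∀ x ∈ U, x ⬝ᵥ Q *ᵥ x ≤ 0) {δ : ℝ} (hδ : 0 < δ) : NegDefOn (Q - δ • 1) U := by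
  intro x hx hx0
  have hxx : 0 < x ⬝ᵥ x :=
    (Finset.sum_nonneg fun i _ => mul_self_nonneg (x i)).lt_of_ne
      (Ne.symm (dotProduct_self_eq_zero.not.2 hx0))
  rw [sub_mulVec, smul_mulVec, one_mulVec, dotProduct_sub, dotProduct_smul, smul_eq_mul]
  nlinarith [hU x hx]

lemma Matrix.IsSymm.dotProduct_mulVec_add_of_mulVec_eq_zero {Q : Matrix ι ι ℝ} (hQ : Q.IsSymm)
    (w : ι → ℝ) {k : ι → ℝ} (hk : Q *ᵥ k = 0) :
    (w + k) ⬝ᵥ Q *ᵥ (w + k) = w ⬝ᵥ Q *ᵥ w := by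
  rw [mulVec_add, hk, add_zero, add_dotProduct, dotProduct_mulVec k, ← mulVec_transpose, hQ.eq,
    hk, zero_dotProduct, add_zero]

end QuadraticForm

section Eigenvectors

variable {ι κ : Type*} [Fintype ι] [Fintype κ] [DecidableEq κ] {v : κ → ι → ℝ}

lemma dotProduct_sum_smul_of_orthonormal (hv : ∀ k l, v k ⬝ᵥ v l = if k = l then 1 else 0)
    (c : κ → ℝ) (l : κ) : v l ⬝ᵥ ∑ k, c k • v k = c l := by
  simp [dotProduct_sum, dotProduct_smul, hv]

lemma linearIndependent_of_orthonormal (hv : ∀ k l, v k ⬝ᵥ v l = if k = l then 1 else 0) :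
    LinearIndependent ℝ v :=
  Fintype.linearIndependent_iff.2 fun c hc l => by
    simpa [hc] using (dotProduct_sum_smul_of_orthonormal hv c l).symm

lemma sum_smul_dotProduct_mulVec_sum_smul {Q : Matrix ι ι ℝ} {μ : κ → ℝ}
    (hv : ∀ k l, v k ⬝ᵥ v l = if k = l then 1 else 0) (hQv : ∀ k, Q *ᵥ v k = μ k • v k)
    (c : κ → ℝ) :
    (∑ k, c k • v k) ⬝ᵥ Q *ᵥ ∑ k, c k • v k = ∑ k, μ k * c k ^ 2 := by
  simp only [mulVec_sum, mulVec_smul, hQv, smul_smul, dotProduct_sum, dotProduct_smul,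
    dotProduct_comm _ (v _), dotProduct_sum_smul_of_orthonormal hv, smul_eq_mul]
  exact Finset.sum_congr rfl fun k _ => by ring

lemma negDefOn_span_of_eigenvalues_neg {Q : Matrix ι ι ℝ} {μ : κ → ℝ}
    (hv : ∀ k l, v k ⬝ᵥ v l = if k = l then 1 else 0) (hQv : ∀ k, Q *ᵥ v k = μ k • v k)
    (hμ : ∀ k, μ k < 0) : NegDefOn Q (span ℝ (Set.range v)) := by
  intro x hx hx0
  obtain ⟨c, rfl⟩ := (mem_span_range_iff_exists_fun ℝ).1 hx
  obtain ⟨k, hk⟩ : ∃ k, c k ≠ 0 := by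
    by_contra! hc
    simp [hc] at hx0
  rw [sum_smul_dotProduct_mulVec_sum_smul hv hQv, ← neg_pos, ← Finset.sum_neg_distrib]
  exact Finset.sum_pos' (fun l _ => by nlinarith [hμ l, sq_nonneg (c l)])
    ⟨k, Finset.mem_univ k, by nlinarith [hμ k, pow_pos (abs_pos.2 hk) 2, sq_abs (c k)]⟩

lemma Matrix.IsSymm.exists_orthonormal_eigenvectors [DecidableEq ι] {Q : Matrix ι ι ℝ}
    (hQ : Q.IsSymm) :
    ∃ (v : ι → ι → ℝ) (μ : ι → ℝ),
      (∀ i j, v i ⬝ᵥ v j = if i = j then 1 else 0) ∧ ∀ i, Q *ᵥ v i = μ i • v i := by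
  have hH : Q.IsHermitian := isHermitian_iff_isSymm.2 hQ
  refine ⟨fun i => hH.eigenvectorBasis i, hH.eigenvalues, fun i j => ?_,
    hH.mulVec_eigenvectorBasis⟩
  rw [← orthonormal_iff_ite.1 hH.eigenvectorBasis.orthonormal i j,
    EuclideanSpace.inner_eq_star_dotProduct, star_trivial, dotProduct_comm]

lemma card_neg_add_card_pos_add_card_zero (μ : ι → ℝ) :
    Fintype.card {i // μ i < 0} + Fintype.card {i // 0 < μ i} + Fintype.card {i // μ i = 0} =
      Fintype.card ι := by
  simp only [Fintype.card_subtype, Finset.card_filter]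
  rw [← Finset.sum_add_distrib, ← Finset.sum_add_distrib, ← Finset.card_univ,
    Finset.card_eq_sum_ones]
  refine Finset.sum_congr rfl fun i _ => ?_
  rcases lt_trichotomy (μ i) 0 with h | h | h
  · simp [h, h.ne, h.not_gt]
  · simp [h]
  · simp [h, h.ne', h.not_gt]

end Eigenvectors

section Inertia

variable {n : ℕ} {Q : Matrix (Fin n) (Fin n) ℝ}

lemma bddAbove_finrank_negDefOn (Q : Matrix (Fin n) (Fin n) ℝ) :
    BddAbove {d | ∃ W : Submodule ℝ (Fin n → ℝ), finrank ℝ W = d ∧ NegDefOn Q W} :=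
  ⟨n, by rintro _ ⟨W, rfl, -⟩; simpa using W.finrank_le⟩

lemma finrank_le_negIndex {W : Submodule ℝ (Fin n → ℝ)} (h : NegDefOn Q W) :
    finrank ℝ W ≤ negIndex Q :=
  le_csSup (bddAbove_finrank_negDefOn Q) ⟨W, rfl, h⟩

lemma exists_negDefOn_finrank_eq_negIndex (Q : Matrix (Fin n) (Fin n) ℝ) :
    ∃ W : Submodule ℝ (Fin n → ℝ), finrank ℝ W = negIndex Q ∧ NegDefOn Q W := by
  refine Nat.sSup_mem ?_ (bddAbove_finrank_negDefOn Q)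
  exact ⟨0, ⊥, finrank_bot ℝ _, fun _ hx hx0 => (hx0 ((mem_bot ℝ).1 hx)).elim⟩

lemma negIndex_le (Q : Matrix (Fin n) (Fin n) ℝ) : negIndex Q ≤ n := by
  obtain ⟨W, hW, -⟩ := exists_negDefOn_finrank_eq_negIndex Q
  simpa [hW] using W.finrank_le

lemma isOpen_setOf_le_negIndex (d : ℕ) :
    IsOpen {Q : Matrix (Fin n) (Fin n) ℝ | d ≤ negIndex Q} := by
  have h : {Q : Matrix (Fin n) (Fin n) ℝ | d ≤ negIndex Q} =
      ⋃ (W : Submodule ℝ (Fin n → ℝ)) (_ : d ≤ finrank ℝ W), {Q | NegDefOn Q W} := by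
    ext Q
    simp only [Set.mem_iUnion, exists_prop]
    constructor
    · obtain ⟨W, hW, hQW⟩ := exists_negDefOn_finrank_eq_negIndex Q
      exact fun hd => ⟨W, hW ▸ hd, hQW⟩
    · rintro ⟨W, hd, hQW⟩
      exact hd.trans (finrank_le_negIndex hQW)
  rw [h]
  exact isOpen_biUnion fun W _ => isOpen_setOf_negDefOn W

lemma negIndex_add_negIndex_neg_le (Q : Matrix (Fin n) (Fin n) ℝ) :
    negIndex Q + negIndex (-Q) ≤ n := by
  obtain ⟨W, hW, hQW⟩ := exists_negDefOn_finrank_eq_negIndex Q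
  obtain ⟨V, hV, hQV⟩ := exists_negDefOn_finrank_eq_negIndex (-Q)
  have hWV : Disjoint W V := by
    refine Submodule.disjoint_def.2 fun x hxW hxV => by_contra fun hx0 => ?_
    have hneg := hQV x hxV hx0
    rw [neg_mulVec, dotProduct_neg] at hneg
    linarith [hQW x hxW hx0]
  simpa [hW, hV] using Submodule.finrank_add_finrank_le_of_disjoint hWV

lemma negIndex_add_finrank_ker_le_negIndex_sub_smul_one (hQ : Q.IsSymm) {δ : ℝ} (hδ : 0 < δ) :
    negIndex Q + finrank ℝ (LinearMap.ker (toLin' Q)) ≤ negIndex (Q - δ • 1) := by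
  obtain ⟨W, hW, hQW⟩ := exists_negDefOn_finrank_eq_negIndex Q
  set K := LinearMap.ker (toLin' Q)
  have hWK : Disjoint W K := by
    refine Submodule.disjoint_def.2 fun x hxW hxK => by_contra fun hx0 => ?_
    have hneg := hQW x hxW hx0
    rw [LinearMap.mem_ker, toLin'_apply] at hxK
    simp [hxK] at hneg
  have hnonpos : ∀ x ∈ W ⊔ K, x ⬝ᵥ Q *ᵥ x ≤ 0 := by
    intro x hx
    obtain ⟨w, hw, k, hk, rfl⟩ := mem_sup.1 hx
    rw [LinearMap.mem_ker, toLin'_apply] at hk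
    rw [hQ.dotProduct_mulVec_add_of_mulVec_eq_zero w hk]
    rcases eq_or_ne w 0 with rfl | hw0
    · simp
    · exact (hQW w hw hw0).le
  calc negIndex Q + finrank ℝ K = finrank ℝ ↥(W ⊔ K) := by
        rw [← hW, ← finrank_sup_add_finrank_inf_eq, hWK.eq_bot, finrank_bot, add_zero]
    _ ≤ negIndex (Q - δ • 1) := finrank_le_negIndex (negDefOn_sub_smul_one hnonpos hδ)

lemma negIndex_add_finrank_ker_le (hQ : Q.IsSymm) :
    negIndex Q + finrank ℝ (LinearMap.ker (toLin' Q)) ≤ n :=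
  (negIndex_add_finrank_ker_le_negIndex_sub_smul_one hQ one_pos).trans (negIndex_le _)

lemma card_le_negIndex_of_eigenvalues_neg {κ : Type*} [Fintype κ] [DecidableEq κ]
    {v : κ → Fin n → ℝ} {μ : κ → ℝ} (hv : ∀ k l, v k ⬝ᵥ v l = if k = l then 1 else 0)
    (hQv : ∀ k, Q *ᵥ v k = μ k • v k) (hμ : ∀ k, μ k < 0) : Fintype.card κ ≤ negIndex Q := by
  rw [← finrank_span_eq_card (linearIndependent_of_orthonormal hv)]
  exact finrank_le_negIndex (negDefOn_span_of_eigenvalues_neg hv hQv hμ)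

lemma le_negIndex_add_negIndex_neg_add_finrank_ker (hQ : Q.IsSymm) :
    n ≤ negIndex Q + negIndex (-Q) + finrank ℝ (LinearMap.ker (toLin' Q)) := by
  obtain ⟨v, μ, hv, hQv⟩ := hQ.exists_orthonormal_eigenvectors
  have hsub (p : Fin n → Prop) (k l : Subtype p) : v k ⬝ᵥ v l = if k = l then 1 else 0 := by
    simp [hv, Subtype.ext_iff]
  have hneg : Fintype.card {i // μ i < 0} ≤ negIndex Q :=
    card_le_negIndex_of_eigenvalues_neg (hsub _) (fun k => hQv k) fun k => k.2
  have hpos : Fintype.card {i // 0 < μ i} ≤ negIndex (-Q) :=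
    card_le_negIndex_of_eigenvalues_neg (μ := fun k => -μ k) (hsub _)
      (fun k => by rw [neg_mulVec, hQv, neg_smul]) fun k => neg_neg_of_pos k.2
  have hzero : Fintype.card {i // μ i = 0} ≤ finrank ℝ (LinearMap.ker (toLin' Q)) := by
    rw [← finrank_span_eq_card (linearIndependent_of_orthonormal (hsub fun i => μ i = 0))]
    refine Submodule.finrank_mono (span_le.2 ?_)
    rintro _ ⟨k, rfl⟩
    simp [hQv, k.2]
  have hcard := card_neg_add_card_pos_add_card_zero μ
  rw [Fintype.card_fin] at hcard
  omega

lemma eventually_negIndex_le (hQ : Q.IsSymm) :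
    ∀ᶠ Q' in 𝓝 Q, negIndex Q' ≤ negIndex Q + finrank ℝ (LinearMap.ker (toLin' Q)) := by
  have hneg : ∀ᶠ Q' in 𝓝 Q, negIndex (-Q) ≤ negIndex (-Q') :=
    continuous_neg.tendsto Q ((isOpen_setOf_le_negIndex _).mem_nhds (le_refl (negIndex (-Q))))
  filter_upwards [hneg] with Q' hQ'
  have h₁ := negIndex_add_negIndex_neg_le Q'
  have h₂ := le_negIndex_add_negIndex_neg_add_finrank_ker hQ
  omega

end Inertia

section Frontier

variable {n j : ℕ}

lemma isClosed_Pj : IsClosed (Pj n j) := by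
  have h : Pj n j = Subtype.val ⁻¹' {Q | j + 1 ≤ negIndex Q}ᶜ := by
    ext Q
    simp [Pj]
  rw [h]
  exact (isOpen_setOf_le_negIndex _).isClosed_compl.preimage continuous_subtype_val

lemma mem_closure_compl_Pj_iff {Q : SymMat n} :
    Q ∈ closure (Pj n j)ᶜ ↔ j < negIndex Q.1 + finrank ℝ (LinearMap.ker (toLin' Q.1)) := by
  have hcompl : (Pj n j)ᶜ = {Q' : SymMat n | j < negIndex Q'.1} := by
    ext
    simp [Pj]
  rw [hcompl]
  constructor
  · intro h
    have hev := (continuous_subtype_val.tendsto Q).eventually (eventually_negIndex_le Q.2)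
    obtain ⟨Q', hlt, hle⟩ := ((mem_closure_iff_frequently.1 h).and_eventually hev).exists
    exact hlt.trans_le hle
  · intro hj
    let shift : ℝ → SymMat n := fun δ => ⟨Q.1 - δ • 1, Q.2.sub (isSymm_one.smul δ)⟩
    refine mem_closure_of_tendsto (f := shift) (b := 𝓝[>] 0) ?_ ?_
    · rw [tendsto_subtype_rng]
      have hcont : Continuous fun δ : ℝ => Q.1 - δ • (1 : Matrix (Fin n) (Fin n) ℝ) := by
        fun_prop
      simpa using (hcont.tendsto 0).mono_left nhdsWithin_le_nhds
    · filter_upwards [self_mem_nhdsWithin] with δ hδ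
      exact hj.trans_le (negIndex_add_finrank_ker_le_negIndex_sub_smul_one Q.2 hδ)

lemma mem_Aj_iff {Q : SymMat n} :
    Q ∈ Aj n j ↔
      negIndex Q.1 ≤ j ∧ j < negIndex Q.1 + finrank ℝ (LinearMap.ker (toLin' Q.1)) := by
  rw [Aj, frontier_eq_closure_inter_closure, isClosed_Pj.closure_eq, Set.mem_inter_iff,
    mem_closure_compl_Pj_iff]
  rfl

end Frontier

theorem Zr_eq_union_inter_frontiers_general (n r : ℕ) :
    {Q : SymMat n | r ≤ Module.finrank ℝ (LinearMap.ker (Matrix.toLin' Q.1))} =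
      ⋃ (i : ℕ) (_ : i + r ≤ n), ⋂ j ∈ Finset.Ico i (i + r), Aj n j := by
  ext Q
  simp only [Set.mem_ofPred_eq, Set.mem_iUnion, Set.mem_iInter, mem_Aj_iff, exists_prop]
  have hn := negIndex_add_finrank_ker_le Q.2
  constructor
  · intro hr
    exact ⟨negIndex Q.1, by omega, fun j hj => by rw [Finset.mem_Ico] at hj; omega⟩
  · rintro ⟨i, -, hA⟩
    have hsub : Finset.Ico i (i + r) ⊆
        Finset.Ico (negIndex Q.1) (negIndex Q.1 + finrank ℝ (LinearMap.ker (toLin' Q.1))) :=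
      fun j hj => Finset.mem_Ico.2 (hA j hj)
    simpa using Finset.card_le_card hsub

/-- For every `r ≥ 1`, the set `Z^(r) = {Q ∈ Sym_n(ℝ) : dim ker(Q) ≥ r}` equals
`⋃_{α ∈ I_r} ⋂_{j ∈ α} A_j`, where `I_r` is the collection of subsets of `{0,…,n−1}`
consisting of `r` consecutive integers. -/
theorem Zr_eq_union_inter_frontiers (n r : ℕ) (hr : 1 ≤ r) :
    {Q : SymMat n | r ≤ Module.finrank ℝ (LinearMap.ker (Matrix.toLin' Q.1))} =
      ⋃ (i : ℕ) (_ : i + r ≤ n), ⋂ j ∈ Finset.Ico i (i + r), Aj n j :=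
  Zr_eq_union_inter_frontiers_general n r
end

section
/- Let H(x) = 2δ(1+x)^{k+1} / ((1+2x)(1+δx)). Then the (k−2)-nd Taylor coefficient of H at x = 0 equals (−1)^k · Σ_{j=0}^{k−2} ( Σ_{i=0}^{j} C(k+1,i)·(−1/2)^i ) · 2^{j+1} · δ^{k−j−1}. -/
/-!
Near `0`, `H` is `2δ (1 + x)^(k+1)` times the geometric series of `(1 + 2x)⁻¹` and of
`(1 + δx)⁻¹`, so it is the sum of the double Cauchy product of these three power series.
A function that is the sum of a power series near `0` is analytic there, and by uniqueness of
power series its Taylor coefficients are the coefficients of that series. The coefficient of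
`x^(k-2)` becomes the stated formula after pulling `(-2)^j` out of the inner sums.
-/

open Finset Filter Topology FormalMultilinearSeries

theorem iteratedDeriv_div_factorial_eq_of_eventually_hasSum {𝕜 : Type*}
    [NontriviallyNormedField 𝕜] [CompleteSpace 𝕜] [CharZero 𝕜] {f : 𝕜 → 𝕜} {c : ℕ → 𝕜}
    (h : ∀ᶠ x in 𝓝 0, HasSum (fun n ↦ c n * x ^ n) (f x)) (n : ℕ) :
    iteratedDeriv n f 0 / n.factorial = c n := by
  have hc : HasFPowerSeriesAt f (ofScalars 𝕜 c) 0 := by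
    rw [hasFPowerSeriesAt_iff]
    simpa only [coeff_ofScalars, smul_eq_mul, mul_comm, zero_add] using h
  exact congrFun (ofScalars_series_injective 𝕜 𝕜
    (hc.analyticAt.hasFPowerSeriesAt.eq_formalMultilinearSeries hc)) n

theorem hasSum_choose_mul_pow (m : ℕ) (x : ℝ) :
    HasSum (fun n ↦ (m.choose n : ℝ) * x ^ n) ((1 + x) ^ m) := by
  have hbinom : (1 + x) ^ m = ∑ n ∈ range (m + 1), (m.choose n : ℝ) * x ^ n := by
    rw [add_comm, add_pow]
    exact sum_congr rfl fun n _ ↦ by ring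
  rw [hbinom]
  exact hasSum_sum_of_ne_finset_zero fun n hn ↦ by
    rw [Nat.choose_eq_zero_of_lt (by simpa using hn), Nat.cast_zero, zero_mul]

theorem hasSum_neg_pow_mul_pow {c x : ℝ} (h : |c * x| < 1) :
    HasSum (fun n ↦ (-c) ^ n * x ^ n) (1 + c * x)⁻¹ := by
  convert hasSum_geometric_of_abs_lt_one (r := -(c * x)) (by rwa [abs_neg]) using 1
  · simp only [← mul_pow, neg_mul]
  · rw [sub_neg_eq_add]

theorem HasSum.mul_powerSeries {a b : ℕ → ℝ} {x A B : ℝ} (ha : HasSum (fun n ↦ a n * x ^ n) A)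
    (hb : HasSum (fun n ↦ b n * x ^ n) B) :
    HasSum (fun n ↦ (∑ i ∈ range (n + 1), a i * b (n - i)) * x ^ n) (A * B) := by
  -- over `ℝ`, every summable family is absolutely summable
  have h := hasSum_sum_range_mul_of_summable_norm (summable_norm_iff (E := ℝ) |>.mpr ha.summable)
    (summable_norm_iff (E := ℝ) |>.mpr hb.summable)
  rw [ha.tsum_eq, hb.tsum_eq] at h
  refine h.congr_fun fun n ↦ ?_
  rw [sum_mul]
  refine sum_congr rfl fun i hi ↦ ?_
  rw [← pow_mul_pow_sub x (Nat.le_of_lt_succ (mem_range.mp hi))]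
  ring

theorem eventually_abs_mul_lt_one (c : ℝ) : ∀ᶠ x in 𝓝 0, |c * x| < 1 :=
  (continuous_const.mul continuous_id).abs.continuousAt.eventually_lt continuousAt_const
    (by simp)

theorem hasSum_mul_one_add_pow_div (c : ℝ) (m : ℕ) {a b x : ℝ} (ha : |a * x| < 1)
    (hb : |b * x| < 1) :
    HasSum (fun n ↦ (c * ∑ j ∈ range (n + 1),
        (∑ i ∈ range (j + 1), (m.choose i : ℝ) * (-a) ^ (j - i)) * (-b) ^ (n - j)) * x ^ n)
      (c * (1 + x) ^ m / ((1 + a * x) * (1 + b * x))) := by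
  have h := (HasSum.mul_powerSeries ((hasSum_choose_mul_pow m x).mul_powerSeries
    (hasSum_neg_pow_mul_pow ha)) (hasSum_neg_pow_mul_pow hb)).mul_left c
  rw [mul_div_assoc, div_mul_eq_div_div, div_eq_mul_inv, div_eq_mul_inv]
  exact h.congr_fun fun n ↦ by ring

theorem sum_range_mul_pow_sub {K : Type*} [Field K] (f : ℕ → K) {r : K} (hr : r ≠ 0) (j : ℕ) :
    ∑ i ∈ range (j + 1), f i * r ^ (j - i) = r ^ j * ∑ i ∈ range (j + 1), f i * r⁻¹ ^ i := by
  rw [mul_sum]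
  refine sum_congr rfl fun i hi ↦ ?_
  rw [pow_sub₀ _ hr (Nat.le_of_lt_succ (mem_range.mp hi)), inv_pow]
  ring

theorem taylor_coeff_H_general (k : ℕ) (hk : 2 ≤ k) (δ : ℝ)
    (H : ℝ → ℝ)
    (hH : ∀ x : ℝ, H x = 2 * δ * (1 + x) ^ (k + 1) / ((1 + 2 * x) * (1 + δ * x))) :
    iteratedDeriv (k - 2) H 0 / (Nat.factorial (k - 2) : ℝ) =
      (-1 : ℝ) ^ k * ∑ j ∈ Finset.range (k - 1),
        (∑ i ∈ Finset.range (j + 1), ((k + 1).choose i : ℝ) * (-1 / 2) ^ i) *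
          2 ^ (j + 1) * δ ^ (k - j - 1) := by
  have hseries : ∀ᶠ x in 𝓝 0, HasSum _ (H x) :=
    (eventually_abs_mul_lt_one 2).and (eventually_abs_mul_lt_one δ) |>.mono
      fun x hx ↦ hH x ▸ hasSum_mul_one_add_pow_div (2 * δ) (k + 1) hx.1 hx.2
  rw [iteratedDeriv_div_factorial_eq_of_eventually_hasSum hseries]
  obtain ⟨n, rfl⟩ : ∃ n, k = n + 2 := ⟨k - 2, by omega⟩
  rw [Nat.add_sub_cancel, show n + 2 - 1 = n + 1 by omega, mul_sum, mul_sum]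
  refine sum_congr rfl fun j hj ↦ ?_
  obtain ⟨l, rfl⟩ : ∃ l, n = j + l := ⟨n - j, by have := mem_range.mp hj; omega⟩
  rw [sum_range_mul_pow_sub _ (by norm_num : (-2 : ℝ) ≠ 0), Nat.add_sub_cancel_left,
    show j + l + 2 - j - 1 = l + 1 by omega, show (-2 : ℝ)⁻¹ = -1 / 2 by norm_num, neg_pow,
    neg_pow δ]
  ring

/-- Let `H(x) = 2δ(1+x)^{k+1} / ((1+2x)(1+δx))`.  The `(k−2)`-nd Taylor coefficient of `H`
at `x = 0`, i.e. `H^{(k-2)}(0)/(k-2)!`, equals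
`(−1)^k · ∑_{j=0}^{k−2} ( ∑_{i=0}^{j} C(k+1,i)·(−1/2)^i ) · 2^{j+1} · δ^{k−j−1}`. -/
theorem taylor_coeff_H (k : ℕ) (hk : 2 ≤ k) (δ : ℝ) (hδ : 0 < δ)
    (H : ℝ → ℝ)
    (hH : ∀ x : ℝ, H x = 2 * δ * (1 + x) ^ (k + 1) / ((1 + 2 * x) * (1 + δ * x))) :
    iteratedDeriv (k - 2) H 0 / (Nat.factorial (k - 2) : ℝ) =
      (-1 : ℝ) ^ k * ∑ j ∈ Finset.range (k - 1),
        (∑ i ∈ Finset.range (j + 1), ((k + 1).choose i : ℝ) * (-1 / 2) ^ i) *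
          2 ^ (j + 1) * δ ^ (k - j - 1) :=
  taylor_coeff_H_general k hk δ H hH
end
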